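/- For ν ≥ 0 and u ≥ 0 define the modified Bessel function of the first kind by the convergent series I_ν(u) := ∑_{k=0}^∞ (u/2)^{ν+2k}/(k!·Γ(ν+k+1)). Then for every ν ≥ 0 there exists a constant C = C(ν) ≥ 1 such that for all u > 0, u^ν/(2^ν·Γ(ν+1)·I_ν(u)) ≤ C·e^{−u/2}. -/

import Mathlib

set_option maxHeartbeats 1000000

noncomputable section

open Finset

/-- Gamma as product. -/
lemma gamma_prod (ν : ℝ) (hν : 0 ≤ ν) (k : ℕ) :
    Real.Gamma (ν + k + 1) = Real.Gamma (ν + 1) * ∏ j ∈ range k, (ν + j + 1) := by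
  induction k with
  | zero => simp
  | succ n ih =>
    have h1 : ν + (n + 1 : ℕ) + 1 = (ν + n + 1) + 1 := by push_cast; ring
    have h2 : (ν + n + 1) ≠ 0 := by positivity
    rw [h1, Real.Gamma_add_one h2, ih, prod_range_succ]
    ring

lemma fact_prod (a k : ℕ) : a.factorial * ∏ j ∈ range k, (a + j + 1) = (a+k).factorial := by
  induction k with
  | zero => simp
  | succ n ih =>
    rw [prod_range_succ, ← mul_assoc, ih]
    rw [show a + (n+1) = (a+n)+1 from rfl, Nat.factorial_succ]
    ring

lemma two_fact (k : ℕ) : ((2*k).factorial : ℝ) = (k.factorial : ℝ) * ∏ j ∈ range k, ((k : ℝ) + j + 1) := by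
  have := fact_prod k k
  have h : ((k.factorial : ℝ)) * ∏ j ∈ range k, ((k:ℝ) + j + 1) = ((k + k).factorial : ℝ) := by exact_mod_cast this
  push_cast at h
  rw [two_mul]
  rw [← h]

/-- key upper bound: k! Γ(ν+k+1) ≤ e^ν Γ(ν+1) (2k)! -/
lemma gamma_ub (ν : ℝ) (hν : 0 ≤ ν) (k : ℕ) :
    (k.factorial : ℝ) * Real.Gamma (ν + k + 1) ≤ Real.exp ν * Real.Gamma (ν + 1) * (2*k).factorial := by
  have hG : 0 < Real.Gamma (ν + 1) := Real.Gamma_pos_of_pos (by linarith)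
  rcases Nat.eq_zero_or_pos k with hk | hk
  · subst hk
    simp only [Nat.factorial_zero, Nat.cast_one, one_mul, Nat.mul_zero, Nat.cast_zero, add_zero]
    nlinarith [Real.one_le_exp hν]
  · have hkR : (0:ℝ) < k := by exact_mod_cast hk
    rw [gamma_prod ν hν, two_fact]
    have hprod : ∏ j ∈ range k, (ν + j + 1) ≤ ∏ j ∈ range k, ((1 + ν / k) * ((k:ℝ) + j + 1)) := by
      apply Finset.prod_le_prod
      · intro j _; positivity
      · intro j hj
        have hj' : (j:ℝ) ≥ 0 := by positivity
        have : (1 + ν / k) * ((k:ℝ) + j + 1) = (k:ℝ) + j + 1 + ν * ((k:ℝ)+j+1) / k := by ring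
        rw [this]
        have h3 : ν * ((k:ℝ)+j+1)/k - ν = ν * ((j:ℝ)+1) / k := by field_simp; ring
        have h4 : (0:ℝ) ≤ ν * ((j:ℝ)+1) / k := by positivity
        nlinarith
    have hpow : ∏ j ∈ range k, ((1 + ν / k) * ((k:ℝ) + j + 1))
        = (1 + ν / k)^k * ∏ j ∈ range k, ((k:ℝ) + j + 1) := by
      rw [Finset.prod_mul_distrib, Finset.prod_const, Finset.card_range]
    have hexp : (1 + ν / k)^k ≤ Real.exp ν := by
      have h1 : (1 + ν / k) ≤ Real.exp (ν / k) := by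
        have := Real.add_one_le_exp (ν / k); linarith
      calc (1 + ν / k)^k ≤ (Real.exp (ν / k))^k := by
            apply pow_le_pow_left₀ (by positivity) h1
        _ = Real.exp ν := by
            rw [← Real.exp_nat_mul]
            congr 1; field_simp
    have hprodpos : (0:ℝ) < ∏ j ∈ range k, ((k:ℝ) + j + 1) := by
      apply Finset.prod_pos; intro j _; positivity
    calc (k.factorial : ℝ) * (Real.Gamma (ν + 1) * ∏ j ∈ range k, (ν + j + 1))
        ≤ (k.factorial : ℝ) * (Real.Gamma (ν + 1) * (Real.exp ν * ∏ j ∈ range k, ((k:ℝ) + j + 1))) := by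
          have hfk : (0:ℝ) < k.factorial := by exact_mod_cast Nat.factorial_pos k
          have h2 : ∏ j ∈ range k, (ν + j + 1) ≤ Real.exp ν * ∏ j ∈ range k, ((k:ℝ) + j + 1) :=
            (hprod.trans (le_of_eq hpow)).trans
              (mul_le_mul_of_nonneg_right hexp (le_of_lt hprodpos))
          gcongr
      _ = Real.exp ν * Real.Gamma (ν + 1) * ((k.factorial : ℝ) * ∏ j ∈ range k, ((k:ℝ) + j + 1)) := by ring

def besselI (ν u : ℝ) : ℝ :=
  ∑' k : ℕ, (u / 2) ^ (ν + 2 * (k : ℝ)) / ((k.factorial : ℝ) * Real.Gamma (ν + (k : ℝ) + 1))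

/-- The estimate from the proof of Lemma 4.2: for every `ν ≥ 0` there is `C = C(ν) ≥ 1`
such that `u^ν/(2^ν Γ(ν+1) I_ν(u)) ≤ C e^{-u/2}` for all `u > 0`. -/
theorem statement16 (ν : ℝ) (hν : 0 ≤ ν) :
    ∃ C : ℝ, 1 ≤ C ∧ ∀ u : ℝ, 0 < u →
      u ^ ν / (2 ^ ν * Real.Gamma (ν + 1) * besselI ν u) ≤ C * Real.exp (-u / 2) := by
  have hG : 0 < Real.Gamma (ν + 1) := Real.Gamma_pos_of_pos (by linarith)
  have hE : (1:ℝ) ≤ Real.exp ν := Real.one_le_exp hν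
  refine ⟨2 * Real.exp ν, by linarith, ?_⟩
  intro u hu
  set x := u / 2 with hxdef
  have hx0 : 0 < x := by positivity
  -- rewrite terms
  have hterm : ∀ k : ℕ, (u/2) ^ (ν + 2*(k:ℝ)) / ((k.factorial : ℝ) * Real.Gamma (ν + k + 1))
      = x ^ ν * ((x^2)^k / ((k.factorial : ℝ) * Real.Gamma (ν + k + 1))) := by
    intro k
    have h1 : (u/2) ^ (ν + 2*(k:ℝ)) = x ^ ν * (x^2)^k := by
      rw [← hxdef, Real.rpow_add hx0]
      congr 1
      have : (2*(k:ℝ)) = ((2*k : ℕ) : ℝ) := by push_cast; ring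
      rw [this, Real.rpow_natCast, pow_mul]
    rw [h1, mul_div_assoc]
  -- positivity & bounds on Gamma
  have hGk : ∀ k : ℕ, 0 < Real.Gamma (ν + k + 1) := by
    intro k; apply Real.Gamma_pos_of_pos; positivity
  have hGlb : ∀ k : ℕ, Real.Gamma (ν + 1) * (k.factorial : ℝ) ≤ Real.Gamma (ν + k + 1) := by
    intro k
    rw [gamma_prod ν hν]
    gcongr
    calc (k.factorial : ℝ) = ∏ j ∈ range k, ((j:ℝ) + 1) := by
          rw [← Finset.prod_range_add_one_eq_factorial k]; push_cast; exact Finset.prod_congr rfl fun i _ => by ring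
      _ ≤ ∏ j ∈ range k, (ν + j + 1) := by
          apply Finset.prod_le_prod
          · intro j _; positivity
          · intro j _; linarith
  -- summability of the Bessel series
  have hsum : Summable (fun k : ℕ => (u / 2) ^ (ν + 2 * (k : ℝ)) /
      ((k.factorial : ℝ) * Real.Gamma (ν + (k : ℝ) + 1))) := by
    have hg : Summable (fun k : ℕ => (x ^ ν / Real.Gamma (ν + 1)) * ((x^2)^k / (k.factorial : ℝ))) :=
      (Real.summable_pow_div_factorial (x^2)).mul_left _
    refine hg.of_nonneg_of_le (fun k => by positivity) (fun k => ?_)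
    · rw [hterm k, div_mul_div_comm, mul_div_assoc]
      have hkf : (0:ℝ) < (k.factorial : ℝ) := by exact_mod_cast Nat.factorial_pos k
      gcongr x ^ ν * ((x^2)^k / ?_)
      calc Real.Gamma (ν + 1) * (k.factorial:ℝ) ≤ Real.Gamma (ν + k + 1) := hGlb k
          _ ≤ (k.factorial:ℝ) * Real.Gamma (ν + k + 1) := by
              have h1 : (1:ℝ) ≤ (k.factorial : ℝ) := by
                exact_mod_cast Nat.one_le_iff_ne_zero.mpr (Nat.factorial_ne_zero k)
              nlinarith [hGk k]
  -- cosh series and its summability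
  have hcosh : HasSum (fun k : ℕ => x ^ (2*k) / ((2*k).factorial : ℝ)) (Real.cosh x) :=
    Real.hasSum_cosh x
  have hlowsum : HasSum
      (fun k : ℕ => x ^ ν / (Real.exp ν * Real.Gamma (ν + 1)) * (x ^ (2*k) / ((2*k).factorial : ℝ)))
      (x ^ ν / (Real.exp ν * Real.Gamma (ν + 1)) * Real.cosh x) := hcosh.mul_left _
  -- lower bound for besselI
  have hlb : x ^ ν / (Real.exp ν * Real.Gamma (ν + 1)) * Real.cosh x ≤ besselI ν u := by
    rw [besselI, ← hlowsum.tsum_eq]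
    apply Summable.tsum_le_tsum _ hlowsum.summable hsum
    intro k
    rw [hterm k, pow_mul, div_mul_div_comm, mul_div_assoc]
    have hkf : (0:ℝ) < (k.factorial : ℝ) := by exact_mod_cast Nat.factorial_pos k
    gcongr x ^ ν * ((x^2)^k / ?_)
    exact gamma_ub ν hν k
  have hcosh_ge : Real.exp x / 2 ≤ Real.cosh x := by
    rw [Real.cosh_eq]
    have := Real.exp_pos (-x)
    linarith
  have hB : x ^ ν * Real.exp x / (2 * (Real.exp ν * Real.Gamma (ν + 1))) ≤ besselI ν u := by
    refine le_trans ?_ hlb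
    rw [div_mul_eq_mul_div, div_le_div_iff₀ (by positivity) (by positivity)]
    have h5 : Real.exp x ≤ 2 * Real.cosh x := by linarith
    nlinarith [mul_le_mul_of_nonneg_left h5
      (show (0:ℝ) ≤ x ^ ν * (Real.exp ν * Real.Gamma (ν + 1)) by positivity)]
  -- conclude
  have hBpos : 0 < x ^ ν * Real.exp x / (2 * (Real.exp ν * Real.Gamma (ν + 1))) := by positivity
  have hIpos : 0 < besselI ν u := lt_of_lt_of_le hBpos hB
  have hu2 : u ^ ν = 2 ^ ν * x ^ ν := by
    rw [← Real.mul_rpow (by norm_num) (le_of_lt hx0)]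
    congr 1
    rw [hxdef]; ring
  have hDle : 2 ^ ν * Real.Gamma (ν + 1) *
      (x ^ ν * Real.exp x / (2 * (Real.exp ν * Real.Gamma (ν + 1))))
      ≤ 2 ^ ν * Real.Gamma (ν + 1) * besselI ν u := by
    gcongr
  have h2ν : (0:ℝ) < (2:ℝ) ^ ν := Real.rpow_pos_of_pos (by norm_num) ν
  calc u ^ ν / (2 ^ ν * Real.Gamma (ν + 1) * besselI ν u)
      ≤ u ^ ν / (2 ^ ν * Real.Gamma (ν + 1) *
        (x ^ ν * Real.exp x / (2 * (Real.exp ν * Real.Gamma (ν + 1))))) := by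
        apply div_le_div_of_nonneg_left (by positivity) (by positivity) hDle
    _ = 2 * Real.exp ν * Real.exp (-u/2) := by
        rw [hu2]
        rw [show (-u/2 : ℝ) = -(u/2) by ring, ← hxdef, Real.exp_neg]
        field_simp

end
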